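/- arXiv:1611.03962 — 6 statements merged into one kernel-verified Lean document; each statement's English description precedes it below -/
import Mathlib

section
/- The determinant of the Jacobian matrix (∂σ_j/∂x_i)_{1≤i,j≤n}, where σ_j is the j-th elementary symmetric polynomial in x_1,…,x_n, equals (up to sign) the Vandermonde determinant ∏_{1≤i<j≤n}(x_i − x_j). -/
/-!
Write `x̂ᵢ` for the variables other than `xᵢ`. Splitting off `xᵢ` gives
`σ_{j+1} = σ_{j+1}(x̂ᵢ) + xᵢ σ_j(x̂ᵢ)`, so `∂σ_{j+1}/∂xᵢ = σ_j(x̂ᵢ)`, and dividing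
`∏ₗ (1 + xₗ T)` by `1 + xᵢ T` gives `σ_j(x̂ᵢ) = ∑_{m ≤ j} (-xᵢ)^m σ_{j-m}`.
Hence the Jacobian is the Vandermonde matrix of `-x₁, …, -xₙ` times the unitriangular
Toeplitz matrix `(σ_{j-k})_{k ≤ j}`, and its determinant is `∏_{i<j} (xᵢ - xⱼ)` on the nose.
-/

open Finset MvPolynomial

namespace Multiset

variable {R : Type*}

theorem esymm_zero_right [CommSemiring R] (s : Multiset R) : s.esymm 0 = 1 := by
  simp [esymm, powersetCard_zero_left]

theorem esymm_cons_succ [CommSemiring R] (a : R) (s : Multiset R) (k : ℕ) :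
    (a ::ₘ s).esymm (k + 1) = s.esymm (k + 1) + a * s.esymm k := by
  simp only [esymm, powersetCard_cons, map_add, sum_add, map_map, Function.comp_def, prod_cons,
    sum_map_mul_left]

theorem esymm_eq_sum_esymm_cons [CommRing R] (a : R) (s : Multiset R) (k : ℕ) :
    s.esymm k = ∑ m ∈ Finset.range (k + 1), (-a) ^ m * (a ::ₘ s).esymm (k - m) := by
  induction k with
  | zero => simp [esymm_zero_right]
  | succ k ih =>
    have h : s.esymm (k + 1) = (a ::ₘ s).esymm (k + 1) - a * s.esymm k := by
      rw [esymm_cons_succ]; ring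
    rw [h, ih, Finset.sum_range_succ' _ (k + 1), Finset.mul_sum, sub_eq_neg_add,
      ← Finset.sum_neg_distrib]
    simp only [pow_succ, Nat.add_sub_add_right, pow_zero, Nat.sub_zero, one_mul]
    congr 1
    exact Finset.sum_congr rfl fun m _ => by ring

end Multiset

theorem Derivation.map_esymm_eq_zero {R A M : Type*} [CommSemiring R] [CommSemiring A]
    [Algebra R A] [AddCommMonoid M] [Module A M] [Module R M] (D : Derivation R A M)
    (s : Multiset A) (hs : ∀ a ∈ s, D a = 0) (k : ℕ) : D (s.esymm k) = 0 := by
  induction s using Multiset.induction_on generalizing k with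
  | empty => cases k <;> simp [Multiset.esymm, Multiset.powersetCard_zero_right]
  | cons a s ih =>
    cases k with
    | zero => simp [Multiset.esymm_zero_right]
    | succ k =>
      have ih' := ih fun b hb => hs b (Multiset.mem_cons_of_mem hb)
      rw [Multiset.esymm_cons_succ, map_add, D.leibniz, hs a (Multiset.mem_cons_self a s), ih',
        ih', smul_zero, smul_zero, add_zero, add_zero]

namespace MvPolynomial

variable {σ R : Type*} [Fintype σ] [DecidableEq σ]

theorem esymm_eq_esymm_cons_erase [CommSemiring R] (i : σ) (k : ℕ) :
    esymm σ R k = (X i ::ₘ (univ.erase i).val.map X).esymm k := by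
  rw [esymm_eq_multiset_esymm, erase_val, ← Multiset.map_cons,
    Multiset.cons_erase (mem_univ_val i)]

theorem pderiv_esymm_succ [CommSemiring R] (i : σ) (k : ℕ) :
    pderiv i (esymm σ R (k + 1)) = ((univ.erase i).val.map X).esymm k := by
  have hzero :
      ∀ m, pderiv i (((univ.erase i).val.map (X : σ → MvPolynomial σ R)).esymm m) = 0 :=
    (pderiv i).map_esymm_eq_zero _ fun a ha => by
      obtain ⟨j, hj, rfl⟩ := Multiset.mem_map.mp ha
      exact pderiv_X_of_ne (Finset.ne_of_mem_erase hj)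
  rw [esymm_eq_esymm_cons_erase i, Multiset.esymm_cons_succ, map_add, hzero, Derivation.leibniz,
    hzero, pderiv_X_self, smul_zero, zero_add, zero_add, smul_eq_mul, mul_one]

theorem pderiv_esymm_succ_eq_sum [CommRing R] (i : σ) (k : ℕ) :
    pderiv i (esymm σ R (k + 1)) =
      ∑ m ∈ range (k + 1), (-X i) ^ m * esymm σ R (k - m) := by
  rw [pderiv_esymm_succ, Multiset.esymm_eq_sum_esymm_cons (X i)]
  simp_rw [← esymm_eq_esymm_cons_erase i]

end MvPolynomial

namespace Matrix

variable {R : Type*} {n : ℕ}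

def upperToeplitz [Zero R] (c : ℕ → R) : Matrix (Fin n) (Fin n) R :=
  of fun k j => if k ≤ j then c (j - k) else 0

theorem det_upperToeplitz [CommRing R] (c : ℕ → R) :
    (upperToeplitz c : Matrix (Fin n) (Fin n) R).det = c 0 ^ n := by
  have htri : (upperToeplitz c : Matrix (Fin n) (Fin n) R).IsUpperTriangular :=
    fun k j (hjk : j < k) => if_neg (not_le.mpr hjk)
  rw [det_of_isUpperTriangular htri]
  simp [upperToeplitz]

theorem vandermonde_mul_upperToeplitz_apply [CommRing R] (v : Fin n → R) (c : ℕ → R)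
    (i j : Fin n) :
    (vandermonde v * upperToeplitz c : Matrix (Fin n) (Fin n) R) i j =
      ∑ m ∈ range (j + 1), v i ^ m * c (j - m) := by
  have hfilter : (range n).filter (· ≤ (j : ℕ)) = range (j + 1) := by
    ext m; simp only [mem_filter, mem_range]; omega
  rw [mul_apply, ← hfilter, sum_filter, ← Fin.sum_univ_eq_sum_range]
  simp [upperToeplitz, vandermonde_apply]

end Matrix

theorem jacobian_esymm_det_general (K : Type) [Field K] (n : ℕ)
    (M : Matrix (Fin n) (Fin n) (MvPolynomial (Fin n) K))
    (hM : ∀ i j : Fin n, M i j = pderiv i (esymm (Fin n) K ((j : ℕ) + 1))) :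
    M.det = ∏ i : Fin n, ∏ j ∈ Finset.Ioi i, (X i - X j) ∨
      M.det = -∏ i : Fin n, ∏ j ∈ Finset.Ioi i, (X i - X j) := by
  have hfactor :
      M = Matrix.vandermonde (fun i => -X i) * Matrix.upperToeplitz (esymm (Fin n) K) := by
    ext i j
    rw [hM, pderiv_esymm_succ_eq_sum, Matrix.vandermonde_mul_upperToeplitz_apply]
  left
  rw [hfactor, Matrix.det_mul, Matrix.det_upperToeplitz, esymm_zero, one_pow, mul_one,
    Matrix.det_vandermonde]
  simp only [neg_sub_neg]

/-- The determinant of the Jacobian matrix `(∂σ_j/∂x_i)` of the elementary symmetric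
polynomials equals, up to sign, the Vandermonde determinant `∏_{i<j} (x_i - x_j)`. -/
theorem jacobian_esymm_det (K : Type) [Field K] [CharZero K] (n : ℕ)
    (M : Matrix (Fin n) (Fin n) (MvPolynomial (Fin n) K))
    (hM : ∀ i j : Fin n, M i j = pderiv i (esymm (Fin n) K ((j : ℕ) + 1))) :
    M.det = ∏ i : Fin n, ∏ j ∈ Finset.Ioi i, (X i - X j) ∨
      M.det = -∏ i : Fin n, ∏ j ∈ Finset.Ioi i, (X i - X j) :=
  jacobian_esymm_det_general K n M hM
end

section
/- If k > n, then the Vandermonde polynomial w_n = ∏_{1≤i<j≤n}(x_i − x_j) is nonzero in the Milnor ring k[x_1,…,x_n]/(x_1^{k−1},…,x_n^{k−1}). -/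
/-! The staircase monomial `x₀⁰ x₁¹ ⋯ xₙ₋₁ⁿ⁻¹` occurs in the Vandermonde product with coefficient
`±1`: expanding `det (xᵢ^j)` by the Leibniz formula, only the identity permutation produces it.
Its exponents are at most `n - 1 < k - 1`, so no generator `xᵢ^(k-1)` of the monomial ideal
`milnorIdeal` divides it, and it has coefficient `0` in every element of that ideal. -/

open MvPolynomial

noncomputable def milnorIdeal (K : Type) [Field K] (n k : ℕ) : Ideal (MvPolynomial (Fin n) K) :=
  Ideal.span (Set.range fun i : Fin n => (X i : MvPolynomial (Fin n) K) ^ (k - 1))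

noncomputable abbrev MilnorRing (K : Type) [Field K] (n k : ℕ) :=
  MvPolynomial (Fin n) K ⧸ milnorIdeal K n k

noncomputable def permAct (K : Type) [Field K] (n k : ℕ) (σ : Equiv.Perm (Fin n)) :
    MilnorRing K n k →ₐ[K] MilnorRing K n k :=
  Ideal.Quotient.liftₐ (milnorIdeal K n k)
    ((Ideal.Quotient.mkₐ K (milnorIdeal K n k)).comp (rename σ)) (by
      intro a ha
      simp only [AlgHom.comp_apply, Ideal.Quotient.mkₐ_eq_mk]
      rw [Ideal.Quotient.eq_zero_iff_mem]
      have hmap : (milnorIdeal K n k).map (rename (R := K) σ) ≤ milnorIdeal K n k := by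
        rw [milnorIdeal, Ideal.map_span]
        apply Ideal.span_le.2
        rintro _ ⟨_, ⟨i, rfl⟩, rfl⟩
        simp only [map_pow, rename_X]
        exact Ideal.subset_span ⟨σ i, rfl⟩
      exact hmap (Ideal.mem_map_of_mem _ ha))

noncomputable def vandermonde (K : Type) [Field K] (n : ℕ) : MvPolynomial (Fin n) K :=
  ∏ i : Fin n, ∏ j ∈ Finset.Ioi i, (X i - X j)

noncomputable def antisym (K : Type) [Field K] (n k : ℕ) : Submodule K (MilnorRing K n k) :=
  ⨅ σ : Equiv.Perm (Fin n),
    Module.End.eigenspace (permAct K n k σ).toLinearMap ((Equiv.Perm.sign σ : ℤ) : K)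

noncomputable def invSubalg (K : Type) [Field K] (n k : ℕ) : Subalgebra K (MilnorRing K n k) where
  carrier := {a | ∀ σ, permAct K n k σ a = a}
  mul_mem' := fun ha hb => fun σ => by rw [map_mul, ha σ, hb σ]
  add_mem' := fun ha hb => fun σ => by rw [map_add, ha σ, hb σ]
  one_mem' := fun σ => map_one _
  zero_mem' := fun σ => map_zero _
  algebraMap_mem' := fun r σ => (permAct K n k σ).commutes r

noncomputable def staircase (n : ℕ) : Fin n →₀ ℕ :=
  Finsupp.equivFunOnFinite.symm fun i => i

@[simp]
lemma staircase_apply {n : ℕ} (i : Fin n) : staircase n i = i := rfl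

lemma equivMapDomain_staircase_eq_self_iff {n : ℕ} (σ : Equiv.Perm (Fin n)) :
    (staircase n).equivMapDomain σ = staircase n ↔ σ = 1 := by
  refine ⟨fun h => Equiv.ext fun i => ?_, fun h => by subst h; ext; rfl⟩
  have := DFunLike.congr_fun h (σ i)
  simp only [Finsupp.equivMapDomain_apply, Equiv.symm_apply_apply, staircase_apply] at this
  exact Fin.ext this.symm

lemma prod_X_perm_pow_eq_monomial {R : Type*} [CommSemiring R] {n : ℕ} (σ : Equiv.Perm (Fin n)) :
    ∏ i, (X (σ i) : MvPolynomial (Fin n) R) ^ (i : ℕ) =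
      monomial ((staircase n).equivMapDomain σ) 1 := by
  rw [monomial_eq, C_1, one_mul, Finsupp.prod_fintype _ _ fun _ => pow_zero _]
  exact Fintype.prod_equiv σ _ _ fun i => by simp

lemma coeff_staircase_det_vandermonde_X {R : Type*} [CommRing R] (n : ℕ) :
    coeff (staircase n) (Matrix.vandermonde (X : Fin n → MvPolynomial (Fin n) R)).det = 1 := by
  classical
  simp only [Matrix.det_apply, Matrix.vandermonde_apply, prod_X_perm_pow_eq_monomial,
    Units.smul_def, zsmul_eq_mul, coeff_sum]
  rw [Finset.sum_eq_single 1]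
  · simp [(equivMapDomain_staircase_eq_self_iff 1).2 rfl]
  · intro σ _ hσ
    rw [← map_intCast (C : R →+* MvPolynomial (Fin n) R), coeff_C_mul, coeff_monomial,
      if_neg (mt (equivMapDomain_staircase_eq_self_iff σ).1 hσ), mul_zero]
  · simp

lemma vandermonde_eq_neg_one_pow_mul_det (K : Type) [Field K] (n : ℕ) :
    vandermonde K n = (-1) ^ (∑ i : Fin n, (Finset.Ioi i).card) *
      (Matrix.vandermonde (X : Fin n → MvPolynomial (Fin n) K)).det := by
  rw [vandermonde, Matrix.det_vandermonde, ← Finset.prod_pow_eq_pow_sum,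
    ← Finset.prod_mul_distrib]
  refine Finset.prod_congr rfl fun i _ => ?_
  simp only [← Finset.prod_neg, neg_sub]

lemma coeff_staircase_vandermonde (K : Type) [Field K] (n : ℕ) :
    coeff (staircase n) (vandermonde K n) = (-1) ^ (∑ i : Fin n, (Finset.Ioi i).card) := by
  rw [vandermonde_eq_neg_one_pow_mul_det, ← map_one C, ← map_neg C, ← map_pow C, coeff_C_mul,
    coeff_staircase_det_vandermonde_X, mul_one]

lemma coeff_eq_zero_of_mem_span_X_pow {σ R : Type*} [CommSemiring R] {m : ℕ}
    {p : MvPolynomial σ R} (hp : p ∈ Ideal.span (Set.range fun i => X i ^ m))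
    {d : σ →₀ ℕ} (hd : ∀ i, d i < m) : coeff d p = 0 := by
  have hspan : Set.range (fun i => (X i : MvPolynomial σ R) ^ m) =
      (fun s => monomial s (1 : R)) '' Set.range fun i => Finsupp.single i m := by
    rw [← Set.range_comp]
    simp [Function.comp_def, X_pow_eq_monomial]
  rw [hspan, mem_ideal_span_monomial_image] at hp
  by_contra hne
  obtain ⟨_, ⟨i, rfl⟩, hle⟩ := hp d (mem_support_iff.2 hne)
  exact (hd i).not_ge (by simpa using hle i)

theorem vandermonde_ne_zero_in_milnor_general (K : Type) [Field K] (n k : ℕ)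
    (hk : n < k) :
    Ideal.Quotient.mk (milnorIdeal K n k) (vandermonde K n) ≠ 0 := by
  rw [Ne, Ideal.Quotient.eq_zero_iff_mem]
  intro hmem
  have hcoeff := coeff_eq_zero_of_mem_span_X_pow hmem (d := staircase n) fun i => by
    simp only [staircase_apply]; omega
  rw [coeff_staircase_vandermonde] at hcoeff
  exact pow_ne_zero _ (neg_ne_zero.2 one_ne_zero) hcoeff

/-- For `k > n`, the Vandermonde polynomial is nonzero in the Milnor ring
`K[x_1,…,x_n]/(x_1^{k-1},…,x_n^{k-1})`. -/
theorem vandermonde_ne_zero_in_milnor (K : Type) [Field K] [CharZero K] (n k : ℕ)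
    (hk : n < k) :
    Ideal.Quotient.mk (milnorIdeal K n k) (vandermonde K n) ≠ 0 :=
  vandermonde_ne_zero_in_milnor_general K n k hk
end

section
/- The space of S_n-antisymmetric elements of the Milnor ring k[x_1,…,x_n]/(x_1^{k−1},…,x_n^{k−1}), with k > n, has dimension equal to the binomial coefficient C(k−1, n). -/
/-!
Antisymmetrizing the monomial `x^d` over `S_n` gives zero unless the exponents `d i` are
distinct, and otherwise depends, up to sign, only on the set of exponents. Since the
antisymmetrizer acts as `n!`, a unit in characteristic zero, on antisymmetric elements, the
antisymmetric part of the Milnor ring is spanned by the classes of these antisymmetrized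
monomials; those with an exponent `≥ k - 1` vanish, leaving one for each `n`-subset of
`{0, …, k - 2}`. They are linearly independent because each has coefficient `1` at its sorted
exponent, where all the others vanish.
-/

open MvPolynomial

open Equiv

lemma Finsupp.mapDomain_perm_mul {ι M : Type*} [AddCommMonoid M] (σ τ : Perm ι)
    (d : ι →₀ M) : d.mapDomain ⇑(σ * τ) = (d.mapDomain τ).mapDomain σ := by
  rw [← Finsupp.mapDomain_comp]; rfl

lemma Finsupp.mapDomain_swap_eq_self {ι M : Type*} [DecidableEq ι] [AddCommMonoid M]
    {d : ι →₀ M} {i j : ι} (h : d i = d j) : d.mapDomain (swap i j) = d := by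
  ext x
  rw [Finsupp.mapDomain_equiv_apply, symm_swap, swap_apply_def]
  split_ifs with hi hj <;> simp [*]

lemma Finsupp.range_mapDomain_perm {ι M : Type*} [AddCommMonoid M] (σ : Perm ι)
    (d : ι →₀ M) : Set.range (d.mapDomain σ) = Set.range d := by
  ext x
  simp only [Set.mem_range, Finsupp.mapDomain_equiv_apply]
  exact σ.symm.surjective.exists (p := fun y => d y = x) |>.symm

section AltMonomial

variable {ι R : Type*} [Fintype ι] [DecidableEq ι] [CommRing R]

lemma Equiv.Perm.intCast_sign_mul_self (σ : Perm ι) :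
    ((Perm.sign σ : ℤ) : R) * ((Perm.sign σ : ℤ) : R) = 1 := by
  rw [← Int.cast_mul, ← Units.val_mul, Int.units_mul_self, Units.val_one, Int.cast_one]

variable (R) in
noncomputable def altMonomial (d : ι →₀ ℕ) : MvPolynomial ι R :=
  ∑ σ : Perm ι, monomial (d.mapDomain σ) ((Perm.sign σ : ℤ) : R)

lemma rename_altMonomial (τ : Perm ι) (d : ι →₀ ℕ) :
    rename τ (altMonomial R d) = ((Perm.sign τ : ℤ) : R) • altMonomial R d := by
  rw [altMonomial, map_sum, Finset.smul_sum]
  refine Fintype.sum_equiv (Equiv.mulLeft τ) _ _ fun σ => ?_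
  rw [rename_monomial, smul_monomial, ← Finsupp.mapDomain_perm_mul, Equiv.coe_mulLeft,
    Perm.sign_mul, Units.val_mul, Int.cast_mul, smul_eq_mul, ← mul_assoc,
    Perm.intCast_sign_mul_self, one_mul]

lemma altMonomial_mapDomain (π : Perm ι) (d : ι →₀ ℕ) :
    altMonomial R (d.mapDomain π) = ((Perm.sign π : ℤ) : R) • altMonomial R d := by
  rw [altMonomial, altMonomial, Finset.smul_sum]
  refine Fintype.sum_equiv (Equiv.mulRight π) _ _ fun σ => ?_
  rw [smul_monomial, ← Finsupp.mapDomain_perm_mul, Equiv.coe_mulRight, Perm.sign_mul,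
    Units.val_mul, Int.cast_mul, smul_eq_mul, mul_left_comm, Perm.intCast_sign_mul_self, mul_one]

lemma altMonomial_eq_zero_of_not_injective {d : ι →₀ ℕ} (hd : ¬ Function.Injective d) :
    altMonomial R d = 0 := by
  obtain ⟨i, j, hij, hne⟩ : ∃ i j, d i = d j ∧ i ≠ j := by
    simpa [Function.Injective] using hd
  -- pair each `σ` with `σ * swap i j`: the two monomials agree and their signs are opposite
  refine Finset.sum_involution (fun σ _ => σ * swap i j) (fun σ _ => ?_)
    (fun σ _ _ => mt mul_swap_eq_iff.1 hne) (fun _ _ => Finset.mem_univ _)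
    (fun σ _ => by simp)
  rw [Finsupp.mapDomain_perm_mul, Finsupp.mapDomain_swap_eq_self hij, ← map_add,
    Perm.sign_mul, Perm.sign_swap hne]
  simp

lemma coeff_altMonomial (e d : ι →₀ ℕ) :
    coeff e (altMonomial R d) =
      ∑ σ : Perm ι, if d.mapDomain σ = e then ((Perm.sign σ : ℤ) : R) else 0 := by
  simp only [altMonomial, coeff_sum, coeff_monomial]

lemma coeff_self_altMonomial {d : ι →₀ ℕ} (hd : Function.Injective d) :
    coeff d (altMonomial R d) = 1 := by
  rw [coeff_altMonomial, Finset.sum_eq_single 1 (fun σ _ hσ => if_neg fun h => hσ ?_)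
    (by simp)]
  · simp
  ext a
  simpa using hd (DFunLike.congr_fun h (σ a) ▸ Finsupp.mapDomain_apply σ.injective d a)

lemma coeff_altMonomial_eq_zero_of_range_ne {d e : ι →₀ ℕ}
    (h : Set.range d ≠ Set.range e) : coeff e (altMonomial R d) = 0 := by
  refine (coeff_altMonomial e d).trans (Finset.sum_eq_zero fun σ _ => if_neg fun he => h ?_)
  rw [← he, Finsupp.range_mapDomain_perm]

lemma sum_sign_smul_rename (p : MvPolynomial ι R) :
    ∑ σ : Perm ι, ((Perm.sign σ : ℤ) : R) • rename σ p =
      ∑ d ∈ p.support, coeff d p • altMonomial R d := by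
  conv_lhs => rw [p.as_sum]
  simp only [map_sum, rename_monomial, Finset.smul_sum, altMonomial, smul_monomial, smul_eq_mul]
  rw [Finset.sum_comm]
  simp only [mul_comm]

end AltMonomial

section SortedExponent

variable {n m : ℕ}

noncomputable def sortedExponent (S : Finset (Fin m)) (hS : S.card = n) : Fin n →₀ ℕ :=
  Finsupp.equivFunOnFinite.symm fun i => S.orderEmbOfFin hS i

lemma sortedExponent_apply (S : Finset (Fin m)) (hS : S.card = n) (i : Fin n) :
    sortedExponent S hS i = S.orderEmbOfFin hS i := rfl

lemma injective_sortedExponent (S : Finset (Fin m)) (hS : S.card = n) :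
    Function.Injective (sortedExponent S hS) :=
  Fin.val_injective.comp (S.orderEmbOfFin hS).injective

lemma sortedExponent_lt (S : Finset (Fin m)) (hS : S.card = n) (i : Fin n) :
    sortedExponent S hS i < m :=
  (S.orderEmbOfFin hS i).isLt

lemma range_sortedExponent (S : Finset (Fin m)) (hS : S.card = n) :
    Set.range (sortedExponent S hS) = Fin.val '' (S : Set (Fin m)) := by
  rw [← Finset.range_orderEmbOfFin S hS, ← Set.range_comp]
  rfl

lemma eq_of_range_sortedExponent_eq {S T : Finset (Fin m)} (hS : S.card = n) (hT : T.card = n)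
    (h : Set.range (sortedExponent S hS) = Set.range (sortedExponent T hT)) : S = T := by
  rw [range_sortedExponent, range_sortedExponent] at h
  exact Finset.coe_injective (Set.image_injective.2 Fin.val_injective h)

lemma exists_mapDomain_sortedExponent {d : Fin n →₀ ℕ} (hd : Function.Injective d)
    (hlt : ∀ i, d i < m) :
    ∃ (S : Finset (Fin m)) (hS : S.card = n) (π : Perm (Fin n)),
      d = (sortedExponent S hS).mapDomain π := by
  classical
  set f : Fin n → Fin m := fun i => ⟨d i, hlt i⟩
  have hf : Function.Injective f := fun a b h => hd (congrArg Fin.val h)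
  set S := Finset.univ.image f
  have hS : S.card = n := by simp [S, Finset.card_image_of_injective _ hf]
  set π := Tuple.sort f
  have hsorted : f ∘ π = S.orderEmbOfFin hS :=
    Finset.orderEmbOfFin_unique hS (fun i => Finset.mem_image_of_mem f (Finset.mem_univ _))
      ((Tuple.monotone_sort f).strictMono_of_injective (hf.comp π.injective))
  refine ⟨S, hS, π, Finsupp.ext fun a => ?_⟩
  rw [Finsupp.mapDomain_equiv_apply, sortedExponent_apply, ← hsorted]
  simp [f]

end SortedExponent

section Milnor

variable {K : Type} [Field K] {n k : ℕ}

lemma mem_milnorIdeal_iff {p : MvPolynomial (Fin n) K} :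
    p ∈ milnorIdeal K n k ↔ ∀ e ∈ p.support, ∃ i, k - 1 ≤ e i := by
  have : Set.range (fun i : Fin n => (X i : MvPolynomial (Fin n) K) ^ (k - 1)) =
      (fun e => monomial e (1 : K)) '' Set.range fun i => Finsupp.single i (k - 1) := by
    rw [← Set.range_comp]
    simp only [Function.comp_def, X_pow_eq_monomial]
  simp [milnorIdeal, this, mem_ideal_span_monomial_image, Finsupp.single_le_iff]

lemma coeff_eq_zero_of_mem_milnorIdeal {p : MvPolynomial (Fin n) K} (hp : p ∈ milnorIdeal K n k)
    {e : Fin n →₀ ℕ} (he : ∀ i, e i < k - 1) : coeff e p = 0 := by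
  by_contra h
  obtain ⟨i, hi⟩ := mem_milnorIdeal_iff.1 hp e (mem_support_iff.2 h)
  exact (he i).not_ge hi

lemma altMonomial_mem_milnorIdeal {d : Fin n →₀ ℕ} {i : Fin n} (hi : k - 1 ≤ d i) :
    altMonomial K d ∈ milnorIdeal K n k := by
  refine Submodule.sum_mem _ fun σ _ => mem_milnorIdeal_iff.2 fun e he => ⟨σ i, ?_⟩
  rwa [Finset.mem_singleton.1 (support_monomial_subset he), Finsupp.mapDomain_apply σ.injective]

lemma permAct_mk (σ : Perm (Fin n)) (p : MvPolynomial (Fin n) K) :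
    permAct K n k σ (Ideal.Quotient.mkₐ K _ p) = Ideal.Quotient.mkₐ K _ (rename σ p) :=
  rfl

lemma mem_antisym_iff {x : MilnorRing K n k} :
    x ∈ antisym K n k ↔ ∀ σ, permAct K n k σ x = ((Perm.sign σ : ℤ) : K) • x := by
  simp [antisym, Submodule.mem_iInf]

variable (K n k) in
noncomputable def antisymGen (S : {S : Finset (Fin (k - 1)) // S.card = n}) : MilnorRing K n k :=
  Ideal.Quotient.mkₐ K _ (altMonomial K (sortedExponent S.1 S.2))

lemma mk_altMonomial_mem_span_antisymGen (d : Fin n →₀ ℕ) :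
    Ideal.Quotient.mkₐ K (milnorIdeal K n k) (altMonomial K d) ∈
      Submodule.span K (Set.range (antisymGen K n k)) := by
  by_cases hd : Function.Injective d
  swap
  · simp [altMonomial_eq_zero_of_not_injective hd]
  by_cases hlarge : ∃ i, k - 1 ≤ d i
  · obtain ⟨i, hi⟩ := hlarge
    simp [Ideal.Quotient.eq_zero_iff_mem.2 (altMonomial_mem_milnorIdeal hi)]
  push Not at hlarge
  obtain ⟨S, hS, π, rfl⟩ := exists_mapDomain_sortedExponent hd hlarge
  rw [altMonomial_mapDomain, map_smul]
  exact Submodule.smul_mem _ _ (Submodule.subset_span ⟨⟨S, hS⟩, rfl⟩)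

lemma sum_sign_smul_permAct_of_mem_antisym {x : MilnorRing K n k} (hx : x ∈ antisym K n k) :
    ∑ σ : Perm (Fin n), ((Perm.sign σ : ℤ) : K) • permAct K n k σ x =
      (n.factorial : K) • x := by
  simp only [mem_antisym_iff.1 hx, smul_smul, Perm.intCast_sign_mul_self, one_smul,
    Finset.sum_const, Finset.card_univ, Fintype.card_perm, Fintype.card_fin,
    Nat.cast_smul_eq_nsmul]

lemma antisym_le_span_antisymGen [CharZero K] :
    antisym K n k ≤ Submodule.span K (Set.range (antisymGen K n k)) := by
  intro x hx
  have hfac : (n.factorial : K) ≠ 0 := Nat.cast_ne_zero.2 n.factorial_ne_zero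
  rw [← Submodule.smul_mem_iff _ hfac, ← sum_sign_smul_permAct_of_mem_antisym hx]
  obtain ⟨p, rfl⟩ := Ideal.Quotient.mkₐ_surjective K (milnorIdeal K n k) x
  have hsum : ∑ σ : Perm (Fin n),
      ((Perm.sign σ : ℤ) : K) • permAct K n k σ (Ideal.Quotient.mkₐ K _ p) =
        ∑ d ∈ p.support, coeff d p • Ideal.Quotient.mkₐ K _ (altMonomial K d) := by
    simpa only [map_sum, map_smul, permAct_mk] using
      congrArg (Ideal.Quotient.mkₐ K (milnorIdeal K n k)) (sum_sign_smul_rename p)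
  rw [hsum]
  exact Submodule.sum_mem _ fun d _ =>
    Submodule.smul_mem _ _ (mk_altMonomial_mem_span_antisymGen d)

lemma span_antisymGen_le_antisym :
    Submodule.span K (Set.range (antisymGen K n k)) ≤ antisym K n k := by
  rw [Submodule.span_le]
  rintro _ ⟨S, rfl⟩
  exact mem_antisym_iff.2 fun σ => by
    rw [antisymGen, permAct_mk, rename_altMonomial, map_smul]

lemma linearIndependent_antisymGen : LinearIndependent K (antisymGen K n k) := by
  classical
  rw [Fintype.linearIndependent_iff]
  intro c hc T
  have hmem : ∑ S, c S • altMonomial K (sortedExponent S.1 S.2) ∈ milnorIdeal K n k := by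
    rw [← Ideal.Quotient.eq_zero_iff_mem, ← Ideal.Quotient.mkₐ_eq_mk K, map_sum]
    simpa only [map_smul, antisymGen] using hc
  have hcoeff := coeff_eq_zero_of_mem_milnorIdeal hmem (sortedExponent_lt T.1 T.2)
  rwa [coeff_sum, Finset.sum_eq_single T, coeff_smul, coeff_self_altMonomial
    (injective_sortedExponent _ _), smul_eq_mul, mul_one] at hcoeff
  · intro S _ hST
    rw [coeff_smul, coeff_altMonomial_eq_zero_of_range_ne, smul_zero]
    exact fun h => hST (Subtype.ext (eq_of_range_sortedExponent_eq _ _ h))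
  · simp

end Milnor

theorem antisym_finrank_general (K : Type) [Field K] [CharZero K] (n k : ℕ) :
    Module.finrank K (antisym K n k) = Nat.choose (k - 1) n := by
  rw [le_antisymm antisym_le_span_antisymGen span_antisymGen_le_antisym,
    finrank_span_eq_card linearIndependent_antisymGen, Fintype.card_finset_len, Fintype.card_fin]

/-- For `k > n`, the space of `S_n`-antisymmetric elements of the Milnor ring
`K[x]/(x_i^{k-1})` has dimension `C(k-1, n)`. -/
theorem antisym_finrank (K : Type) [Field K] [CharZero K] (n k : ℕ) (hk : n < k) :
    Module.finrank K (antisym K n k) = Nat.choose (k - 1) n :=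
  antisym_finrank_general K n k
end

section
/- Let I ⊆ k[x_1,…,x_n] be an ideal stable under the S_n-action permuting variables, and let I^W = I ∩ k[x]^{S_n} be its invariant part, viewed inside k[y_1,…,y_n] via the isomorphism k[x]^{S_n} ≅ k[y]. If the extension of an ideal J ⊆ k[y] to k[x] contains I, then I^W ⊆ J... specifically: for F_{k,n} and G_{k,n} as above, I_{F_{k,n}}^{S_n} ⊆ I_{G_{k,n}} as ideals of k[y_1,…,y_n]. -/
/-!
By the chain rule, every `∂F/∂x_i` with `F = G(σ₁, …, σₙ)` is a `k[x]`-combination of the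
`(∂G/∂y_j)(σ)`, so the Milnor ideal of `F` lies in the extension of the Milnor ideal of `G` along
`y ↦ σ(x)`. Over a `ℚ`-algebra, averaging over `Sₙ` is a `k[y]`-linear retraction of `k[x]` onto
`k[x]^{Sₙ} ≅ k[y]`, and an ideal of a ring admitting such a retraction is the contraction of its
extension.
-/

namespace Ideal

theorem comap_map_eq_self_of_retraction {S A : Type*} [CommSemiring S] [CommSemiring A]
    (f : S →+* A) (ρ : A →+ S) (hρ : ∀ s a, ρ (f s * a) = s * ρ a) (hρ_one : ρ 1 = 1)
    (I : Ideal S) : (I.map f).comap f = I := by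
  refine le_antisymm (fun s hs => ?_) le_comap_map
  -- quantifying over all multiples `a * x` makes the property stable under the span induction
  have hmul : ∀ x ∈ I.map f, ∀ a, ρ (a * x) ∈ I := by
    intro x hx
    induction hx using Submodule.span_induction with
    | mem x hx =>
      obtain ⟨t, ht, rfl⟩ := hx
      intro a
      rw [mul_comm, hρ]
      exact I.mul_mem_right _ ht
    | zero => simp
    | add x y _ _ hx hy => intro a; rw [mul_add, map_add]; exact I.add_mem (hx a) (hy a)
    | smul b x _ hx => intro a; rw [smul_eq_mul, ← mul_assoc]; exact hx _
  have hρf : ρ (f s) = s := by simpa [hρ_one] using hρ s 1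
  simpa [hρf] using hmul _ hs 1

end Ideal

namespace MvPolynomial

section Symmetrize

variable {σ R : Type*} [Fintype σ] [DecidableEq σ] [CommRing R] [Algebra ℚ R]

noncomputable def symmetrize : MvPolynomial σ R →ₗ[R] symmetricSubalgebra σ R :=
  LinearMap.codRestrict (symmetricSubalgebra σ R).toSubmodule
    ((Fintype.card (Equiv.Perm σ) : ℚ)⁻¹ • ∑ e : Equiv.Perm σ, (rename e).toLinearMap)
    fun p e => by
      simp only [LinearMap.smul_apply, LinearMap.coe_sum, Finset.sum_apply,
        AlgHom.toLinearMap_apply, map_rat_smul, map_sum, rename_rename]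
      congr 1
      exact Fintype.sum_equiv (Equiv.mulLeft e) _ _ fun _ => rfl

theorem coe_symmetrize (p : MvPolynomial σ R) :
    (symmetrize p : MvPolynomial σ R) =
      (Fintype.card (Equiv.Perm σ) : ℚ)⁻¹ • ∑ e : Equiv.Perm σ, rename e p := by
  change ((_ : ℚ)⁻¹ • ∑ e : Equiv.Perm σ, (rename e).toLinearMap) p = _
  simp

theorem symmetrize_mul (p : symmetricSubalgebra σ R) (q : MvPolynomial σ R) :
    symmetrize ((p : MvPolynomial σ R) * q) = p * symmetrize q := by
  ext1
  simp_rw [Subalgebra.coe_mul, coe_symmetrize, map_mul, p.2 _, ← Finset.mul_sum, mul_smul_comm]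

theorem symmetrize_one : symmetrize (1 : MvPolynomial σ R) = 1 := by
  ext1
  simp only [coe_symmetrize, map_one, Finset.sum_const, Finset.card_univ,
    ← Nat.cast_smul_eq_nsmul ℚ, smul_smul, OneMemClass.coe_one]
  rw [inv_mul_cancel₀ (by positivity), one_smul]

end Symmetrize

theorem comap_map_aeval_esymm {R : Type*} [CommRing R] [Algebra ℚ R] {n : ℕ}
    (I : Ideal (MvPolynomial (Fin n) R)) :
    (I.map (aeval fun j : Fin n => esymm (Fin n) R (j + 1))).comap
      (aeval fun j : Fin n => esymm (Fin n) R (j + 1)) = I := by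
  set e := esymmAlgEquiv (Fin n) R (Fintype.card_fin n)
  have he (p) : aeval (fun j : Fin n => esymm (Fin n) R (j + 1)) p = e p :=
    (esymmAlgHom_apply p).symm
  refine Ideal.comap_map_eq_self_of_retraction _ (e.symm.toLinearMap ∘ₗ symmetrize).toAddMonoidHom
    (fun s a => e.injective ?_) (e.injective ?_) I
  · simp only [AlgHom.toRingHom_eq_coe, RingHom.coe_coe, he]
    simpa using symmetrize_mul (e s) a
  · simpa using symmetrize_one

section ChainRule

variable {σ τ R : Type*} [Fintype σ] [CommSemiring R]

theorem pderiv_aeval (f : σ → MvPolynomial τ R) (p : MvPolynomial σ R) (i : τ) :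
    pderiv i (aeval f p) = ∑ j, aeval f (pderiv j p) * pderiv i (f j) := by
  classical
  induction p using MvPolynomial.induction_on with
  | C a => simp
  | add p q hp hq => simp only [map_add, hp, hq, add_mul, Finset.sum_add_distrib]
  | mul_X p s hp =>
    simp only [map_mul, aeval_X, pderiv_mul, hp, pderiv_X, Finset.sum_mul, map_add, add_mul,
      Finset.sum_add_distrib]
    congr 1
    · exact Finset.sum_congr rfl fun j _ => by ring
    · simp [Pi.single_apply]

theorem span_pderiv_aeval_le_map (f : σ → MvPolynomial τ R) (G : MvPolynomial σ R) :
    Ideal.span (Set.range fun i => pderiv i (aeval f G)) ≤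
      (Ideal.span (Set.range fun j => pderiv j G)).map (aeval f) := by
  refine Ideal.span_le.2 <| Set.range_subset_iff.2 fun i => ?_
  rw [SetLike.mem_coe, pderiv_aeval]
  exact Ideal.sum_mem _ fun j _ => Ideal.mul_mem_right _ _ <|
    Ideal.mem_map_of_mem _ <| Ideal.subset_span ⟨j, rfl⟩

end ChainRule

end MvPolynomial

open MvPolynomial

theorem invariant_milnor_ideal_le_general (K : Type) [Field K] [CharZero K] (n : ℕ)
    (F G : MvPolynomial (Fin n) K)
    (hG : aeval (fun j : Fin n => esymm (Fin n) K ((j : ℕ) + 1)) G = F) :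
    ∀ q : MvPolynomial (Fin n) K,
      aeval (fun j : Fin n => esymm (Fin n) K ((j : ℕ) + 1)) q ∈
          Ideal.span (Set.range fun i : Fin n => pderiv i F) →
        q ∈ Ideal.span (Set.range fun j : Fin n => pderiv j G) := by
  intro q hq
  rw [← comap_map_aeval_esymm (Ideal.span _)]
  exact span_pderiv_aeval_le_map _ G (hG ▸ hq)

/-- The invariant part of the Milnor ideal of `F_{k,n}`, viewed in `k[y]` via
`y_j = σ_j(x)`, is contained in the Milnor ideal of `G_{k,n}`: if `q(σ(x))` lies in
the Milnor ideal of `F`, then `q` lies in the Milnor ideal of `G`. -/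
theorem invariant_milnor_ideal_le (K : Type) [Field K] [CharZero K] (n k : ℕ)
    (hk : n < k) (F G : MvPolynomial (Fin n) K)
    (hF : F = ∑ i : Fin n, X i ^ k)
    (hG : aeval (fun j : Fin n => esymm (Fin n) K ((j : ℕ) + 1)) G = F) :
    ∀ q : MvPolynomial (Fin n) K,
      aeval (fun j : Fin n => esymm (Fin n) K ((j : ℕ) + 1)) q ∈
          Ideal.span (Set.range fun i : Fin n => pderiv i F) →
        q ∈ Ideal.span (Set.range fun j : Fin n => pderiv j G) :=
  invariant_milnor_ideal_le_general K n F G hG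
end

section
/- For k > n, the polynomial G_{k,n} has an isolated singularity at the origin; equivalently, the ideal generated by its partial derivatives ∂G_{k,n}/∂y_j contains a power of the maximal ideal (y_1,…,y_n). -/
/-!
Let `e_a` be the elementary symmetric functions (the variables `y_a`), `E(t) = ∑ (-1)^a e_a t^a`,
`H = E⁻¹` (coefficients: the complete homogeneous functions `h_m`) and `P = -t E'/E`
(coefficients: the power sums, by Newton's identities), so that `G = P_k`.
Since `∂E/∂e_j = (-1)^j t^j`, differentiating `P = -t (log E)'` gives
`∂P/∂e_j = (-1)^(j-1) t (t^j H)'`, i.e. `∂G/∂e_j = (-1)^(j-1) k h_{k-j}`.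
Modulo the Jacobian ideal `J` the recursion `E H = 1` then kills every `h_m` with `m ≥ k - n`,
so `E` becomes a unit of `(K[e]/J)[t]`: its coefficients `±e_j` are nilpotent modulo `J`,
and the finitely generated ideal `(e_1, …, e_n)` has a power inside `J`.
-/

namespace Derivation

open PowerSeries

variable {A R : Type*} [CommSemiring A] [CommSemiring R] [Algebra A R]

noncomputable def mapCoeffsPowerSeries (D : Derivation A R R) : Derivation A R⟦X⟧ R⟦X⟧ where
  toFun f := PowerSeries.mk fun m => D (coeff m f)
  map_add' f g := by ext m; simp
  map_smul' a f := by ext m; simp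
  map_one_eq_zero' := by ext m; simp [coeff_one, apply_ite D]
  leibniz' f g := by
    ext m
    simp only [LinearMap.coe_mk, AddHom.coe_mk, coeff_mk, map_add, coeff_mul, map_sum, D.leibniz,
      smul_eq_mul, Finset.sum_add_distrib]
    congr 1
    rw [← Finset.Nat.sum_antidiagonal_swap]
    simp only [Prod.fst_swap, Prod.snd_swap]

@[simp]
theorem coeff_mapCoeffsPowerSeries (D : Derivation A R R) (f : R⟦X⟧) (m : ℕ) :
    coeff m (D.mapCoeffsPowerSeries f) = D (coeff m f) := by
  simp [mapCoeffsPowerSeries]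

theorem mapCoeffsPowerSeries_X (D : Derivation A R R) : D.mapCoeffsPowerSeries X = 0 := by
  ext m; simp [coeff_X, apply_ite D]

theorem mapCoeffsPowerSeries_derivative (D : Derivation A R R) (f : R⟦X⟧) :
    D.mapCoeffsPowerSeries (d⁄dX R f) = d⁄dX R (D.mapCoeffsPowerSeries f) := by
  ext m; simp [coeff_derivative, D.leibniz, mul_comm]

end Derivation

namespace PowerSeries

variable {R : Type*}

theorem coeff_X_mul_derivative [CommSemiring R] (f : R⟦X⟧) (m : ℕ) :
    coeff m (X * d⁄dX R f) = m * coeff m f := by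
  cases m with
  | zero => simp
  | succ m => rw [coeff_succ_X_mul, coeff_derivative, mul_comm]; push_cast; rfl

theorem map_derivative {S : Type*} [CommSemiring R] [CommSemiring S] (φ : R →+* S)
    (f : R⟦X⟧) : map φ (d⁄dX R f) = d⁄dX S (map φ f) := by
  ext m; simp [coeff_derivative]

theorem coe_trunc_of_coeff_eq_zero [Semiring R] {f : R⟦X⟧} {N : ℕ}
    (hf : ∀ a, N ≤ a → coeff a f = 0) : (trunc N f : R⟦X⟧) = f := by
  ext a
  rw [Polynomial.coeff_coe, coeff_trunc]
  split_ifs with h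
  · rfl
  · exact (hf a (not_lt.1 h)).symm

theorem coeff_eq_zero_of_mul_eq_one [CommSemiring R] {E H : R⟦X⟧} (hEH : E * H = 1)
    {n d : ℕ} (hd : 0 < d) (hE : ∀ a, n < a → coeff a E = 0)
    (hH : ∀ m, d ≤ m → m < d + n → coeff m H = 0) :
    ∀ m, d ≤ m → coeff m H = 0 := by
  have hE₀ : IsUnit (coeff 0 E) := by
    refine IsUnit.of_mul_eq_one (coeff 0 H) ?_
    simpa [← map_mul] using congrArg constantCoeff hEH
  intro m
  induction m using Nat.strong_induction_on with
  | _ m ih =>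
  intro hdm
  by_cases hm : m < d + n
  · exact hH m hdm hm
  have hcoeff := congrArg (coeff m) hEH
  have h0m : ((0, m) : ℕ × ℕ) ∈ Finset.HasAntidiagonal.antidiagonal m := by simp
  rw [coeff_mul, coeff_one, if_neg (by omega), ← Finset.add_sum_erase _ _ h0m] at hcoeff
  rw [Finset.sum_eq_zero, add_zero, hE₀.mul_right_eq_zero] at hcoeff
  · exact hcoeff
  rintro ⟨a, b⟩ hab
  rw [Finset.mem_erase, Finset.HasAntidiagonal.mem_antidiagonal, Ne, Prod.mk.injEq] at hab
  by_cases ha : n < a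
  · rw [hE a ha, zero_mul]
  · rw [ih b (by omega) (by omega), mul_zero]

theorem isNilpotent_coeff_of_mul_eq_one [CommRing R] {f g : R⟦X⟧} (hfg : f * g = 1)
    {N M : ℕ} (hf : ∀ a, N ≤ a → coeff a f = 0) (hg : ∀ a, M ≤ a → coeff a g = 0)
    {a : ℕ} (ha : a ≠ 0) :
    IsNilpotent (coeff a f) := by
  have hunit : IsUnit (trunc N f) := by
    refine IsUnit.of_mul_eq_one (trunc M g) (Polynomial.coe_inj.1 ?_)
    rw [Polynomial.coe_mul, coe_trunc_of_coeff_eq_zero hf, coe_trunc_of_coeff_eq_zero hg, hfg,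
      Polynomial.coe_one]
  have := (Polynomial.isUnit_iff_coeff_isUnit_isNilpotent.1 hunit).2 a ha
  rwa [← Polynomial.coeff_coe, coe_trunc_of_coeff_eq_zero hf] at this

end PowerSeries

namespace MvPolynomial

noncomputable def jacobianIdeal {σ R : Type*} [CommSemiring R] (f : MvPolynomial σ R) :
    Ideal (MvPolynomial σ R) :=
  Ideal.span (Set.range fun j => pderiv j f)

open PowerSeries (mk coeff_mk coeff_X_mul_derivative)
open scoped PowerSeries

variable (σ R : Type*) [Fintype σ] [CommRing R]

theorem mk_esymm_mul_mk_psum :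
    (mk fun a => (-1) ^ a * esymm σ R a) * mk (fun r => if r = 0 then 0 else psum σ R r) =
      -(PowerSeries.X * d⁄dX _ (mk fun a => (-1) ^ a * esymm σ R a)) := by
  refine PowerSeries.ext fun r => ?_
  set S := ∑ a ∈ Finset.HasAntidiagonal.antidiagonal r with a.1 < r,
    (-1) ^ a.1 * esymm σ R a.1 * psum σ R a.2 with hS
  have hLHS : PowerSeries.coeff r ((mk fun a => (-1) ^ a * esymm σ R a) *
      mk (fun r => if r = 0 then 0 else psum σ R r)) = S := by
    rw [PowerSeries.coeff_mul, hS, Finset.sum_filter]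
    refine Finset.sum_congr rfl fun x hx => ?_
    rw [Finset.HasAntidiagonal.mem_antidiagonal] at hx
    simp only [coeff_mk, mul_ite, mul_zero]
    split_ifs <;> first | rfl | omega
  have h2 : (-1 : MvPolynomial σ R) ^ r * (-1) ^ r = 1 := by
    rw [← pow_add, Even.neg_one_pow ⟨r, rfl⟩]
  rw [hLHS, map_neg, coeff_X_mul_derivative, coeff_mk]
  linear_combination (-1 : MvPolynomial σ R) ^ r * mul_esymm_eq_sum σ R r - S * h2

end MvPolynomial

namespace Gepner

open PowerSeries
open MvPolynomial (pderiv esymm psum aeval)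

variable (K : Type*) [CommRing K] (n : ℕ)

/-- `elemVar K n a` stands for the `a`-th elementary symmetric function `e_a`: it is the
variable `X (a - 1)` for `1 ≤ a ≤ n`, with `e_0 = 1` and `e_a = 0` for `a > n`. -/
noncomputable def elemVar : ℕ → MvPolynomial (Fin n) K
  | 0 => 1
  | a + 1 => if h : a < n then MvPolynomial.X ⟨a, h⟩ else 0

noncomputable def elemSeries : (MvPolynomial (Fin n) K)⟦X⟧ :=
  mk fun a => (-1) ^ a * elemVar K n a

noncomputable def completeSeries : (MvPolynomial (Fin n) K)⟦X⟧ :=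
  invOfUnit (elemSeries K n) 1

noncomputable def powerSumSeries : (MvPolynomial (Fin n) K)⟦X⟧ :=
  -(X * d⁄dX _ (elemSeries K n)) * completeSeries K n

theorem coeff_elemSeries (a : ℕ) : coeff a (elemSeries K n) = (-1) ^ a * elemVar K n a :=
  coeff_mk _ _

theorem elemSeries_mul_completeSeries : elemSeries K n * completeSeries K n = 1 :=
  mul_invOfUnit _ _ (by simp [← coeff_zero_eq_constantCoeff_apply, coeff_elemSeries, elemVar])

theorem coeff_elemSeries_eq_zero {a : ℕ} (ha : n < a) : coeff a (elemSeries K n) = 0 := by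
  obtain ⟨b, rfl⟩ : ∃ b, a = b + 1 := Nat.exists_eq_add_one.2 (by omega)
  simp [coeff_elemSeries, elemVar, show ¬b < n by omega]

theorem coeff_elemSeries_succ (j : Fin n) :
    coeff (j + 1) (elemSeries K n) = (-1) ^ ((j : ℕ) + 1) * MvPolynomial.X j := by
  simp [coeff_elemSeries, elemVar]

theorem pderiv_elemVar (j : Fin n) (a : ℕ) :
    pderiv j (elemVar K n a) = if a = j + 1 then 1 else 0 := by
  rcases a with _ | a
  · simp [elemVar]
  · by_cases ha : a < n
    · simp only [elemVar, dif_pos ha, Nat.add_right_cancel_iff]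
      by_cases haj : a = j
      · simp [haj]
      · rw [MvPolynomial.pderiv_X_of_ne (by simpa [Fin.ext_iff] using haj), if_neg haj]
    · simp only [elemVar, dif_neg ha, map_zero]
      rw [if_neg (by omega)]

theorem mapCoeffs_pderiv_elemSeries (j : Fin n) :
    (pderiv (R := K) j).mapCoeffsPowerSeries (elemSeries K n) =
      C ((-1) ^ ((j : ℕ) + 1)) * X ^ ((j : ℕ) + 1) := by
  refine PowerSeries.ext fun a => ?_
  rw [Derivation.coeff_mapCoeffsPowerSeries, coeff_elemSeries, coeff_C_mul_X_pow]
  split_ifs with h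
  · simp [h, pderiv_elemVar]
  · simp [pderiv_elemVar, h]

theorem completeSeries_mul_elemSeries : completeSeries K n * elemSeries K n = 1 := by
  rw [mul_comm, elemSeries_mul_completeSeries]

theorem map_elemSeries_mul_map_completeSeries {S : Type*} [CommRing S]
    (f : MvPolynomial (Fin n) K →+* S) :
    map f (elemSeries K n) * map f (completeSeries K n) = 1 := by
  rw [← map_mul, elemSeries_mul_completeSeries, map_one]

theorem mapCoeffs_pderiv_powerSumSeries (j : Fin n) :
    (pderiv (R := K) j).mapCoeffsPowerSeries (powerSumSeries K n) =
      -(X * d⁄dX _ ((pderiv (R := K) j).mapCoeffsPowerSeries (elemSeries K n) *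
        completeSeries K n)) := by
  rw [powerSumSeries, neg_mul, map_neg, Derivation.leibniz, Derivation.leibniz,
    Derivation.mapCoeffsPowerSeries_X, Derivation.mapCoeffsPowerSeries_derivative,
    Derivation.leibniz_of_mul_eq_one _ (completeSeries_mul_elemSeries K n),
    (d⁄dX _).leibniz, (d⁄dX _).leibniz_of_mul_eq_one (completeSeries_mul_elemSeries K n)]
  simp only [smul_eq_mul]
  ring

theorem pderiv_coeff_powerSumSeries (j : Fin n) {k : ℕ} (hjk : (j : ℕ) + 1 ≤ k) :
    pderiv j (coeff k (powerSumSeries K n)) =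
      (-1) ^ (j : ℕ) * k * coeff (k - ((j : ℕ) + 1)) (completeSeries K n) := by
  obtain ⟨r, rfl⟩ : ∃ r, k = r + ((j : ℕ) + 1) := ⟨k - ((j : ℕ) + 1), by omega⟩
  rw [← Derivation.coeff_mapCoeffsPowerSeries, mapCoeffs_pderiv_powerSumSeries,
    mapCoeffs_pderiv_elemSeries, map_neg, coeff_X_mul_derivative, mul_assoc, mul_assoc,
    coeff_C_mul, coeff_X_pow_mul, Nat.add_sub_cancel, pow_succ]
  ring

noncomputable def esymmSubst : MvPolynomial (Fin n) K →ₐ[K] MvPolynomial (Fin n) K :=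
  aeval fun j => esymm (Fin n) K (j + 1)

theorem esymmSubst_injective : Function.Injective (esymmSubst K n) := by
  intro p q hpq
  refine MvPolynomial.esymmAlgHom_fin_injective K le_rfl (Subtype.ext ?_)
  rw [MvPolynomial.esymmAlgHom_apply, MvPolynomial.esymmAlgHom_apply]
  exact hpq

theorem esymmSubst_elemVar (a : ℕ) : esymmSubst K n (elemVar K n a) = esymm (Fin n) K a := by
  rcases a with _ | a
  · simp [elemVar]
  · by_cases ha : a < n
    · simp [elemVar, ha, esymmSubst]
    · rw [elemVar, dif_neg ha, map_zero, MvPolynomial.esymm, Finset.powersetCard_eq_empty.2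
        (by simpa using ha), Finset.sum_empty]

theorem map_esymmSubst_elemSeries :
    map (esymmSubst K n).toRingHom (elemSeries K n) =
      mk fun a => (-1) ^ a * esymm (Fin n) K a := by
  refine PowerSeries.ext fun a => ?_
  simp [coeff_elemSeries, esymmSubst_elemVar]

theorem map_esymmSubst_powerSumSeries :
    map (esymmSubst K n).toRingHom (powerSumSeries K n) =
      mk fun r => if r = 0 then 0 else psum (Fin n) K r := by
  have hunit := map_elemSeries_mul_map_completeSeries K n (esymmSubst K n).toRingHom
  rw [map_esymmSubst_elemSeries] at hunit
  rw [powerSumSeries, map_mul, map_neg, map_mul, map_X, map_derivative, map_esymmSubst_elemSeries,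
    ← MvPolynomial.mk_esymm_mul_mk_psum, mul_right_comm, hunit, one_mul]

theorem esymmSubst_coeff_powerSumSeries {r : ℕ} (hr : r ≠ 0) :
    esymmSubst K n (coeff r (powerSumSeries K n)) = psum (Fin n) K r := by
  simpa [hr] using congrArg (coeff r) (map_esymmSubst_powerSumSeries K n)

section Field

variable {K : Type*} [Field K] [CharZero K] {n k : ℕ}

theorem coeff_completeSeries_mem_jacobianIdeal (j : Fin n) (hjk : (j : ℕ) + 1 ≤ k) :
    coeff (k - ((j : ℕ) + 1)) (completeSeries K n) ∈
      (coeff k (powerSumSeries K n)).jacobianIdeal := by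
  have hunit : IsUnit ((-1) ^ (j : ℕ) * (k : MvPolynomial (Fin n) K)) := by
    refine (isUnit_neg_one.pow _).mul ?_
    rw [← map_natCast MvPolynomial.C]
    exact (Nat.cast_ne_zero.2 (by omega : k ≠ 0)).isUnit.map _
  rw [← Ideal.unit_mul_mem_iff_mem _ hunit, ← pderiv_coeff_powerSumSeries K n j hjk]
  exact Ideal.subset_span ⟨j, rfl⟩

theorem coeff_completeSeries_mem_jacobianIdeal_of_le (hk : n < k) {m : ℕ} (hm : k - n ≤ m) :
    coeff m (completeSeries K n) ∈ (coeff k (powerSumSeries K n)).jacobianIdeal := by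
  set π := Ideal.Quotient.mk (coeff k (powerSumSeries K n)).jacobianIdeal
  have hE (a : ℕ) (ha : n < a) : coeff a (map π (elemSeries K n)) = 0 := by
    rw [coeff_map, coeff_elemSeries_eq_zero K n ha, map_zero]
  have hH (a : ℕ) (ha₁ : k - n ≤ a) (ha₂ : a < k - n + n) :
      coeff a (map π (completeSeries K n)) = 0 := by
    have hidx : k - (k - 1 - a + 1) = a := by omega
    rw [coeff_map, Ideal.Quotient.eq_zero_iff_mem]
    simpa only [Fin.val_mk, hidx] using
      coeff_completeSeries_mem_jacobianIdeal (K := K) (k := k) ⟨k - 1 - a, by omega⟩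
        (by simp only; omega)
  have := coeff_eq_zero_of_mul_eq_one (map_elemSeries_mul_map_completeSeries K n π) (by omega)
    hE hH m hm
  rwa [coeff_map, Ideal.Quotient.eq_zero_iff_mem] at this

theorem X_mem_radical_jacobianIdeal (hk : n < k) (j : Fin n) :
    MvPolynomial.X j ∈ (coeff k (powerSumSeries K n)).jacobianIdeal.radical := by
  set π := Ideal.Quotient.mk (coeff k (powerSumSeries K n)).jacobianIdeal
  obtain ⟨m, hm⟩ := isNilpotent_coeff_of_mul_eq_one
    (map_elemSeries_mul_map_completeSeries K n π) (N := n + 1) (M := k - n)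
    (fun a ha => by rw [coeff_map, coeff_elemSeries_eq_zero K n (by omega), map_zero])
    (fun a ha => by
      rw [coeff_map, Ideal.Quotient.eq_zero_iff_mem]
      exact coeff_completeSeries_mem_jacobianIdeal_of_le hk ha)
    (Nat.succ_ne_zero j)
  rw [coeff_map, coeff_elemSeries_succ, ← map_pow, Ideal.Quotient.eq_zero_iff_mem] at hm
  exact (Ideal.unit_mul_mem_iff_mem _ ((isUnit_neg_one).pow _)).1 ⟨m, hm⟩

end Field

end Gepner

open MvPolynomial

theorem gepner_isolated_singularity_general (K : Type) [Field K] [CharZero K] (n k : ℕ)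
    (hk : n < k) (G : MvPolynomial (Fin n) K)
    (hG : aeval (fun j : Fin n => esymm (Fin n) K ((j : ℕ) + 1)) G
        = ∑ i : Fin n, X i ^ k) :
    ∃ m : ℕ,
      (Ideal.span (Set.range (X : Fin n → MvPolynomial (Fin n) K))) ^ m ≤
        Ideal.span (Set.range fun j : Fin n => pderiv j G) := by
  obtain rfl : G = PowerSeries.coeff k (Gepner.powerSumSeries K n) :=
    Gepner.esymmSubst_injective K n <| hG.trans
      (Gepner.esymmSubst_coeff_powerSumSeries K n (by omega)).symm
  refine Ideal.exists_pow_le_of_le_radical_of_fg (Ideal.span_le.2 ?_)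
    (Submodule.fg_span (Set.finite_range _))
  rintro _ ⟨j, rfl⟩
  exact Gepner.X_mem_radical_jacobianIdeal hk j

/-- For `k > n`, the Gepner polynomial `G_{k,n}` has an isolated singularity at the
origin: the ideal generated by its partial derivatives contains a power of the maximal
ideal `(y_1,…,y_n)`. -/
theorem gepner_isolated_singularity (K : Type) [Field K] [CharZero K] (n k : ℕ)
    (hn : 0 < n) (hk : n < k) (G : MvPolynomial (Fin n) K)
    (hG : aeval (fun j : Fin n => esymm (Fin n) K ((j : ℕ) + 1)) G
        = ∑ i : Fin n, X i ^ k) :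
    ∃ m : ℕ,
      (Ideal.span (Set.range (X : Fin n → MvPolynomial (Fin n) K))) ^ m ≤
        Ideal.span (Set.range fun j : Fin n => pderiv j G) :=
  gepner_isolated_singularity_general K n k hk G hG
end

section
/- For k > n, multiplication by the Vandermonde class w_n gives a k-linear isomorphism from J_{F_{k,n}}^{S_n}/ker(w_n·) onto the antisymmetric part of J_{F_{k,n}}; in particular dim_k (J_{F_{k,n}}^{S_n}/ker(w_n·)) = C(k−1, n). -/
open MvPolynomial

/-!
The monomials `x^m` with exponents `m : Fin n → Fin (k - 1)` form a basis of `J_F` that `S_n`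
permutes, so the coordinates of an antisymmetric element satisfy `c (m ∘ σ) = sgn σ • c m` and
vanish at non-injective `m` (characteristic `≠ 2`). Hence the alternants `det (x_j ^ s_i)`, one for
each `n`-subset `s` of `Fin (k - 1)`, form a basis of the antisymmetric part, which therefore has
dimension `C(k - 1, n)`. Every alternant is divisible by the Vandermonde class `w_n`, and since
`w_n` is antisymmetric, averaging a quotient over `S_n` (characteristic `0`) makes it symmetric.
So `w_n · J_F^{S_n}` is exactly the antisymmetric part, which is isomorphic to
`J_F^{S_n} / ker (w_n ·)`.
-/

open Finset
open scoped Matrix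

section Vandermonde

variable {R : Type*} [CommRing R] {N : ℕ}

lemma prod_Ioi_sub_eq_neg_one_pow_mul_det_vandermonde (v : Fin N → R) :
    ∏ i, ∏ j ∈ Ioi i, (v i - v j) =
      (-1) ^ (∑ i : Fin N, #(Ioi i)) * (Matrix.vandermonde v).det := by
  rw [Matrix.det_vandermonde, ← prod_pow_eq_pow_sum, ← prod_mul_distrib]
  refine prod_congr rfl fun i _ => ?_
  rw [← prod_const, ← prod_mul_distrib]
  exact prod_congr rfl fun j _ => by ring

lemma prod_Ioi_sub_comp_perm (v : Fin N → R) (σ : Equiv.Perm (Fin N)) :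
    ∏ i, ∏ j ∈ Ioi i, (v (σ i) - v (σ j)) =
      Equiv.Perm.sign σ • ∏ i, ∏ j ∈ Ioi i, (v i - v j) := by
  rw [Units.smul_def, zsmul_eq_mul]
  have h := prod_Ioi_sub_eq_neg_one_pow_mul_det_vandermonde (v ∘ σ)
  simp only [Function.comp_apply] at h
  rw [h, show Matrix.vandermonde (v ∘ σ) = (Matrix.vandermonde v).submatrix σ id from rfl,
    Matrix.det_permute, prod_Ioi_sub_eq_neg_one_pow_mul_det_vandermonde]
  ring

/-- Reducing `X ^ μ i` modulo `∏ (X - v j)` writes the matrix as `C * (vandermonde v)ᵀ`. -/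
lemma prod_Ioi_sub_dvd_det_pow (v : Fin N → R) (μ : Fin N → ℕ) :
    ∏ i, ∏ j ∈ Ioi i, (v i - v j) ∣ (Matrix.of fun i j => v j ^ μ i).det := by
  rcases subsingleton_or_nontrivial R with hR | hR
  · exact ⟨0, Subsingleton.elim _ _⟩
  rw [prod_Ioi_sub_eq_neg_one_pow_mul_det_vandermonde, ((isUnit_neg_one).pow _).mul_left_dvd]
  set F := Lagrange.nodal univ v
  have hFm : F.Monic := Lagrange.nodal_monic
  let C : Matrix (Fin N) (Fin N) R := .of fun i t => (Polynomial.X ^ μ i %ₘ F).coeff t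
  have hM : (Matrix.of fun i j => v j ^ μ i) = C * (Matrix.vandermonde v)ᵀ := by
    ext i j
    have hF1 : F ≠ 1 := fun h => i.pos.ne' <| by
      simpa [F, Lagrange.natDegree_nodal] using congrArg Polynomial.natDegree h
    have hdeg : (Polynomial.X ^ μ i %ₘ F).natDegree < N := by
      simpa [F, Lagrange.natDegree_nodal] using
        Polynomial.natDegree_modByMonic_lt _ hFm hF1
    calc v j ^ μ i = (Polynomial.X ^ μ i %ₘ F + F * (Polynomial.X ^ μ i /ₘ F)).eval (v j) := by
          rw [Polynomial.modByMonic_add_div]; simp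
      _ = (Polynomial.X ^ μ i %ₘ F).eval (v j) := by
          simp [F, Lagrange.eval_nodal_at_node (mem_univ j)]
      _ = _ := by
          rw [Polynomial.eval_eq_sum_range' hdeg, ← Fin.sum_univ_eq_sum_range]
          simp [Matrix.mul_apply, C, Matrix.vandermonde_apply]
  rw [hM, Matrix.det_mul, Matrix.det_transpose]
  exact dvd_mul_left _ _

end Vandermonde

section OrderEmbOfFin

variable {α : Type*} [LinearOrder α] {n : ℕ}

lemma orderEmbOfFin_comp_perm_injective :
    Function.Injective fun p : {s : Finset α // #s = n} × Equiv.Perm (Fin n) =>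
      (p.1.1.orderEmbOfFin p.1.2 : Fin n → α) ∘ p.2 := by
  rintro ⟨s, σ⟩ ⟨s', σ'⟩ h
  simp only at h
  obtain rfl : s = s' := by
    refine Subtype.ext (Finset.coe_injective ?_)
    rw [← range_orderEmbOfFin s.1 s.2, ← range_orderEmbOfFin s'.1 s'.2,
      ← σ.surjective.range_comp, h, σ'.surjective.range_comp]
  exact Prod.ext rfl (Equiv.ext fun i => (s.1.orderEmbOfFin s.2).injective (congrFun h i))

lemma exists_orderEmbOfFin_comp_perm {m : Fin n → α} (hm : Function.Injective m) :
    ∃ (s : {s : Finset α // #s = n}) (σ : Equiv.Perm (Fin n)),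
      (s.1.orderEmbOfFin s.2 : Fin n → α) ∘ σ = m := by
  have hcard : #(univ.image m) = n := by
    rw [card_image_of_injective _ hm, card_univ, Fintype.card_fin]
  have hrange : ∀ i, m i ∈ Set.range ((univ.image m).orderEmbOfFin hcard) := fun i => by
    rw [range_orderEmbOfFin]
    exact mem_image_of_mem m (mem_univ i)
  choose u hu using hrange
  have hu_inj : Function.Injective u := fun a b hab => hm (by rw [← hu a, ← hu b, hab])
  exact ⟨⟨_, hcard⟩, Equiv.ofBijective u (Finite.injective_iff_bijective.1 hu_inj),
    funext hu⟩

end OrderEmbOfFin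

namespace MilnorRing

variable {K : Type} [Field K] {n k : ℕ}

lemma mem_milnorIdeal_iff {p : MvPolynomial (Fin n) K} :
    p ∈ milnorIdeal K n k ↔ ∀ d ∈ p.support, ∃ i, k - 1 ≤ d i := by
  have hgen : Set.range (fun i : Fin n => (X i : MvPolynomial (Fin n) K) ^ (k - 1)) =
      (fun d => monomial d 1) '' Set.range fun i => Finsupp.single i (k - 1) := by
    rw [← Set.range_comp]
    simp [Function.comp_def, X_pow_eq_monomial]
  rw [milnorIdeal, hgen, mem_ideal_span_monomial_image]
  simp [Finsupp.single_le_iff]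

variable (K n k) in
noncomputable def var (i : Fin n) : MilnorRing K n k :=
  Ideal.Quotient.mk _ (X i)

lemma mk_monomial (d : Fin n →₀ ℕ) (c : K) :
    Ideal.Quotient.mk (milnorIdeal K n k) (monomial d c) = c • ∏ i, var K n k i ^ d i := by
  rw [monomial_eq, Finsupp.prod_fintype _ _ fun _ => pow_zero _, ← smul_eq_C_mul,
    ← Ideal.Quotient.mkₐ_eq_mk K, map_smul, map_prod]
  rfl

lemma mk_monomial_eq_zero {d : Fin n →₀ ℕ} (c : K) (h : ∃ i, k - 1 ≤ d i) :
    Ideal.Quotient.mk (milnorIdeal K n k) (monomial d c) = 0 := by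
  rw [Ideal.Quotient.eq_zero_iff_mem, mem_milnorIdeal_iff]
  intro d' hd'
  rwa [Finset.mem_singleton.1 (support_monomial_subset hd')]

noncomputable def exponent (m : Fin n → Fin (k - 1)) : Fin n →₀ ℕ :=
  Finsupp.equivFunOnFinite.symm fun i => m i

lemma exponent_injective : Function.Injective (exponent (n := n) (k := k)) :=
  fun _ _ h => funext fun i => Fin.val_injective (DFunLike.congr_fun h i)

lemma linearIndependent_prod_var_pow :
    LinearIndependent K fun m : Fin n → Fin (k - 1) => ∏ i, var K n k i ^ (m i : ℕ) := by
  rw [Fintype.linearIndependent_iff]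
  intro c hc m₀
  have hmem : ∑ m, monomial (exponent m) (c m) ∈ milnorIdeal K n k := by
    rw [← Ideal.Quotient.eq_zero_iff_mem, map_sum, ← hc]
    simp [mk_monomial, exponent]
  by_contra h
  have hsupp : exponent m₀ ∈ (∑ m, monomial (exponent m) (c m)).support := by
    simpa [coeff_sum, coeff_monomial, exponent_injective.eq_iff] using h
  obtain ⟨i, hi⟩ := mem_milnorIdeal_iff.1 hmem _ hsupp
  exact (m₀ i).isLt.not_ge (by simpa [exponent] using hi)

lemma mk_mem_span_prod_var_pow (p : MvPolynomial (Fin n) K) :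
    Ideal.Quotient.mk (milnorIdeal K n k) p ∈
      Submodule.span K (Set.range fun m : Fin n → Fin (k - 1) => ∏ i, var K n k i ^ (m i : ℕ)) := by
  induction p using MvPolynomial.induction_on' with
  | monomial d c =>
    by_cases h : ∃ i, k - 1 ≤ d i
    · rw [mk_monomial_eq_zero c h]
      exact Submodule.zero_mem _
    · simp only [not_exists, not_le] at h
      rw [mk_monomial]
      exact Submodule.smul_mem _ _ (Submodule.subset_span ⟨fun i => ⟨d i, h i⟩, rfl⟩)
  | add p q hp hq => rw [map_add]; exact Submodule.add_mem _ hp hq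

variable (K n k) in
noncomputable def monomialBasis : Module.Basis (Fin n → Fin (k - 1)) K (MilnorRing K n k) :=
  .mk linearIndependent_prod_var_pow fun x _ => by
    obtain ⟨p, rfl⟩ := Ideal.Quotient.mk_surjective x
    exact mk_mem_span_prod_var_pow p

lemma monomialBasis_apply (m : Fin n → Fin (k - 1)) :
    monomialBasis K n k m = ∏ i, var K n k i ^ (m i : ℕ) :=
  Module.Basis.mk_apply _ _ m

lemma permAct_mk (σ : Equiv.Perm (Fin n)) (p : MvPolynomial (Fin n) K) :
    permAct K n k σ (Ideal.Quotient.mk _ p) = Ideal.Quotient.mk _ (rename σ p) :=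
  rfl

lemma permAct_var (σ : Equiv.Perm (Fin n)) (i : Fin n) :
    permAct K n k σ (var K n k i) = var K n k (σ i) := by
  rw [var, permAct_mk, rename_X, var]

lemma permAct_mul (σ τ : Equiv.Perm (Fin n)) (x : MilnorRing K n k) :
    permAct K n k (σ * τ) x = permAct K n k σ (permAct K n k τ x) := by
  obtain ⟨p, rfl⟩ := Ideal.Quotient.mk_surjective x
  simp only [permAct_mk, rename_rename]
  rfl

lemma permAct_monomialBasis (σ : Equiv.Perm (Fin n)) (m : Fin n → Fin (k - 1)) :
    permAct K n k σ (monomialBasis K n k m) = monomialBasis K n k (m ∘ σ.symm) := by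
  simp only [monomialBasis_apply, map_prod, map_pow, permAct_var, Function.comp_apply]
  exact Fintype.prod_equiv σ _ _ fun i => by simp

lemma repr_permAct (σ : Equiv.Perm (Fin n)) (v : MilnorRing K n k) (m : Fin n → Fin (k - 1)) :
    (monomialBasis K n k).repr (permAct K n k σ v) m = (monomialBasis K n k).repr v (m ∘ σ) := by
  have hext : Finsupp.lapply m ∘ₗ (monomialBasis K n k).repr.toLinearMap ∘ₗ
      (permAct K n k σ).toLinearMap =
      Finsupp.lapply (m ∘ σ) ∘ₗ (monomialBasis K n k).repr.toLinearMap :=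
    (monomialBasis K n k).ext fun m' => by
      simp [permAct_monomialBasis, Finsupp.single_apply, Equiv.comp_symm_eq]
  exact LinearMap.congr_fun hext v

lemma mem_antisym_iff {v : MilnorRing K n k} :
    v ∈ antisym K n k ↔ ∀ σ, permAct K n k σ v = Equiv.Perm.sign σ • v := by
  simp only [antisym, Submodule.mem_iInf, Module.End.mem_eigenspace_iff,
    AlgHom.toLinearMap_apply, Units.smul_def, Int.cast_smul_eq_zsmul]

lemma repr_comp_perm_of_mem_antisym {v : MilnorRing K n k} (hv : v ∈ antisym K n k)
    (σ : Equiv.Perm (Fin n)) (m : Fin n → Fin (k - 1)) :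
    (monomialBasis K n k).repr v (m ∘ σ) = Equiv.Perm.sign σ • (monomialBasis K n k).repr v m := by
  rw [← repr_permAct, mem_antisym_iff.1 hv σ, Units.smul_def, Units.smul_def, map_zsmul,
    Finsupp.smul_apply]

lemma repr_eq_zero_of_mem_antisym [NeZero (2 : K)] {v : MilnorRing K n k}
    (hv : v ∈ antisym K n k) {m : Fin n → Fin (k - 1)} (hm : ¬Function.Injective m) :
    (monomialBasis K n k).repr v m = 0 := by
  obtain ⟨a, b, hab, hne⟩ := Function.not_injective_iff.1 hm
  have hswap : m ∘ Equiv.swap a b = m := by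
    funext x
    rw [Function.comp_apply, Equiv.swap_apply_def]
    split_ifs <;> simp_all
  have h := repr_comp_perm_of_mem_antisym hv (Equiv.swap a b) m
  rw [hswap, Equiv.Perm.sign_swap hne, Units.neg_smul, one_smul, eq_neg_iff_add_eq_zero,
    ← two_mul] at h
  exact (mul_eq_zero.1 h).resolve_left two_ne_zero

variable (K n k) in
noncomputable def alternant (s : {s : Finset (Fin (k - 1)) // #s = n}) : MilnorRing K n k :=
  (Matrix.of fun i j => var K n k j ^ (s.1.orderEmbOfFin s.2 i : ℕ)).det

lemma alternant_eq_sum (s : {s : Finset (Fin (k - 1)) // #s = n}) :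
    alternant K n k s =
      ∑ σ, Equiv.Perm.sign σ • monomialBasis K n k ((s.1.orderEmbOfFin s.2 : _ → _) ∘ σ) := by
  simp [alternant, Matrix.det_apply, monomialBasis_apply]

lemma permAct_alternant (σ : Equiv.Perm (Fin n)) (s : {s : Finset (Fin (k - 1)) // #s = n}) :
    permAct K n k σ (alternant K n k s) = Equiv.Perm.sign σ • alternant K n k s := by
  rw [alternant, AlgHom.map_det, Units.smul_def, zsmul_eq_mul, ← Matrix.det_permute']
  congr 1
  ext i j
  simp [permAct_var]

lemma alternant_mem_antisym (s : {s : Finset (Fin (k - 1)) // #s = n}) :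
    alternant K n k s ∈ antisym K n k :=
  mem_antisym_iff.2 fun σ => permAct_alternant σ s

lemma repr_alternant_orderEmbOfFin (s s' : {s : Finset (Fin (k - 1)) // #s = n}) :
    (monomialBasis K n k).repr (alternant K n k s) (s'.1.orderEmbOfFin s'.2) =
      if s = s' then 1 else 0 := by
  have key : ∀ σ : Equiv.Perm (Fin n),
      (s.1.orderEmbOfFin s.2 : _ → _) ∘ σ = s'.1.orderEmbOfFin s'.2 ↔ s = s' ∧ σ = 1 := fun σ =>
    (orderEmbOfFin_comp_perm_injective.eq_iff (a := (s, σ)) (b := (s', 1))).trans Prod.ext_iff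
  simp only [alternant_eq_sum, map_sum, map_zsmul_unit, Module.Basis.repr_self,
    Finsupp.smul_single, Finsupp.coe_finsetSum, Finset.sum_apply, Finsupp.single_apply, key]
  by_cases h : s = s' <;> simp [h]

lemma linearIndependent_alternant : LinearIndependent K (alternant K n k) := by
  rw [Fintype.linearIndependent_iff]
  intro c hc s
  simpa [map_sum, repr_alternant_orderEmbOfFin] using
    congrArg (fun v => (monomialBasis K n k).repr v (s.1.orderEmbOfFin s.2)) hc

lemma eq_zero_of_mem_antisym [NeZero (2 : K)] {v : MilnorRing K n k} (hv : v ∈ antisym K n k)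
    (h : ∀ s : {s : Finset (Fin (k - 1)) // #s = n},
      (monomialBasis K n k).repr v (s.1.orderEmbOfFin s.2) = 0) :
    v = 0 := by
  refine (monomialBasis K n k).ext_elem fun m => ?_
  by_cases hm : Function.Injective m
  · obtain ⟨s, σ, rfl⟩ := exists_orderEmbOfFin_comp_perm hm
    simp [repr_comp_perm_of_mem_antisym hv, h]
  · simpa using repr_eq_zero_of_mem_antisym hv hm

lemma antisym_eq_span_alternant [NeZero (2 : K)] :
    antisym K n k = Submodule.span K (Set.range (alternant K n k)) := by
  have hle : Submodule.span K (Set.range (alternant K n k)) ≤ antisym K n k :=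
    Submodule.span_le.2 (Set.range_subset_iff.2 alternant_mem_antisym)
  refine le_antisymm (fun v hv => ?_) hle
  set v' := ∑ s, (monomialBasis K n k).repr v (s.1.orderEmbOfFin s.2) • alternant K n k s
  have hv' : v' ∈ Submodule.span K (Set.range (alternant K n k)) :=
    Submodule.sum_mem _ fun s _ => Submodule.smul_mem _ _ (Submodule.subset_span ⟨s, rfl⟩)
  have hdiff : v - v' = 0 := eq_zero_of_mem_antisym (Submodule.sub_mem _ hv (hle hv')) fun s => by
    simp [v', map_sum, repr_alternant_orderEmbOfFin]
  rwa [sub_eq_zero.1 hdiff]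

lemma finrank_antisym [NeZero (2 : K)] :
    Module.finrank K (antisym K n k) = (k - 1).choose n := by
  rw [antisym_eq_span_alternant, finrank_span_eq_card linearIndependent_alternant,
    Fintype.card_finset_len, Fintype.card_fin]

lemma mk_vandermonde_eq_prod :
    Ideal.Quotient.mk (milnorIdeal K n k) (vandermonde K n) =
      ∏ i, ∏ j ∈ Ioi i, (var K n k i - var K n k j) := by
  simp [vandermonde, map_prod, map_sub, var]

lemma permAct_mk_vandermonde (σ : Equiv.Perm (Fin n)) :
    permAct K n k σ (Ideal.Quotient.mk (milnorIdeal K n k) (vandermonde K n)) =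
      Equiv.Perm.sign σ • Ideal.Quotient.mk (milnorIdeal K n k) (vandermonde K n) := by
  simp only [mk_vandermonde_eq_prod, map_prod, map_sub, permAct_var]
  exact prod_Ioi_sub_comp_perm (var K n k) σ

lemma mk_vandermonde_mul_mem_antisym {g : MilnorRing K n k} (hg : g ∈ invSubalg K n k) :
    Ideal.Quotient.mk (milnorIdeal K n k) (vandermonde K n) * g ∈ antisym K n k :=
  mem_antisym_iff.2 fun σ => by rw [map_mul, permAct_mk_vandermonde, hg σ, smul_mul_assoc]

lemma mk_vandermonde_dvd_of_mem_antisym [NeZero (2 : K)] {v : MilnorRing K n k}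
    (hv : v ∈ antisym K n k) : Ideal.Quotient.mk (milnorIdeal K n k) (vandermonde K n) ∣ v := by
  rw [antisym_eq_span_alternant] at hv
  induction hv using Submodule.span_induction with
  | mem _ h =>
    obtain ⟨s, rfl⟩ := h
    rw [mk_vandermonde_eq_prod, alternant]
    exact prod_Ioi_sub_dvd_det_pow (var K n k) fun i => (s.1.orderEmbOfFin s.2 i : ℕ)
  | zero => exact dvd_zero _
  | add _ _ _ _ h₁ h₂ => exact dvd_add h₁ h₂
  | smul c _ _ h =>
    obtain ⟨d, rfl⟩ := h
    exact ⟨c • d, (mul_smul_comm c _ _).symm⟩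

lemma exists_mem_invSubalg_mk_vandermonde_mul_eq [CharZero K] {v : MilnorRing K n k}
    (hv : v ∈ antisym K n k) (hdvd : Ideal.Quotient.mk (milnorIdeal K n k) (vandermonde K n) ∣ v) :
    ∃ g ∈ invSubalg K n k, Ideal.Quotient.mk (milnorIdeal K n k) (vandermonde K n) * g = v := by
  set w := Ideal.Quotient.mk (milnorIdeal K n k) (vandermonde K n)
  obtain ⟨g₀, rfl⟩ := hdvd
  have hperm : ∀ σ, w * permAct K n k σ g₀ = w * g₀ := fun σ => by
    have h := mem_antisym_iff.1 hv σ
    rw [map_mul, permAct_mk_vandermonde, smul_mul_assoc] at h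
    exact MulAction.injective _ h
  refine ⟨(n.factorial : K)⁻¹ • ∑ σ, permAct K n k σ g₀, fun τ => ?_, ?_⟩
  · simp only [map_smul, map_sum, ← permAct_mul]
    congr 1
    exact Fintype.sum_equiv (Equiv.mulLeft τ) _ _ fun _ => rfl
  · rw [mul_smul_comm, mul_sum, sum_congr rfl fun σ _ => hperm σ, sum_const, card_univ,
      Fintype.card_perm, Fintype.card_fin, ← Nat.cast_smul_eq_nsmul K, smul_smul,
      inv_mul_cancel₀ (Nat.cast_ne_zero.2 n.factorial_ne_zero), one_smul]

end MilnorRing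

theorem vandermonde_mul_quotient_iso_general (K : Type) [Field K] [CharZero K] (n k : ℕ) :
    LinearMap.range
        ((LinearMap.mulLeft K
            (Ideal.Quotient.mk (milnorIdeal K n k) (vandermonde K n))).comp
          (Subalgebra.toSubmodule (invSubalg K n k)).subtype) =
      antisym K n k ∧
    Module.finrank K
        (↥(Subalgebra.toSubmodule (invSubalg K n k)) ⧸
          LinearMap.ker
            ((LinearMap.mulLeft K
                (Ideal.Quotient.mk (milnorIdeal K n k) (vandermonde K n))).comp
              (Subalgebra.toSubmodule (invSubalg K n k)).subtype)) =
      Nat.choose (k - 1) n := by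
  set f := (LinearMap.mulLeft K
      (Ideal.Quotient.mk (milnorIdeal K n k) (vandermonde K n))).comp
    (Subalgebra.toSubmodule (invSubalg K n k)).subtype
  have hrange : LinearMap.range f = antisym K n k := by
    refine le_antisymm ?_ fun v hv => ?_
    · rintro _ ⟨g, rfl⟩
      exact MilnorRing.mk_vandermonde_mul_mem_antisym g.2
    · obtain ⟨g, hg, rfl⟩ := MilnorRing.exists_mem_invSubalg_mk_vandermonde_mul_eq hv
        (MilnorRing.mk_vandermonde_dvd_of_mem_antisym hv)
      exact ⟨⟨g, hg⟩, rfl⟩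
  exact ⟨hrange, by rw [f.quotKerEquivRange.finrank_eq, hrange, MilnorRing.finrank_antisym]⟩

/-- For `k > n`, multiplication by the Vandermonde class `w_n` induces a linear
isomorphism `J_F^{S_n}/ker(w_n·) ≃ (antisymmetric part of J_F)`: its range is the
antisymmetric part and `dim J_F^{S_n}/ker(w_n·) = C(k-1,n)`. -/
theorem vandermonde_mul_quotient_iso (K : Type) [Field K] [CharZero K] (n k : ℕ)
    (hk : n < k) :
    LinearMap.range
        ((LinearMap.mulLeft K
            (Ideal.Quotient.mk (milnorIdeal K n k) (vandermonde K n))).comp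
          (Subalgebra.toSubmodule (invSubalg K n k)).subtype) =
      antisym K n k ∧
    Module.finrank K
        (↥(Subalgebra.toSubmodule (invSubalg K n k)) ⧸
          LinearMap.ker
            ((LinearMap.mulLeft K
                (Ideal.Quotient.mk (milnorIdeal K n k) (vandermonde K n))).comp
              (Subalgebra.toSubmodule (invSubalg K n k)).subtype)) =
      Nat.choose (k - 1) n :=
  vandermonde_mul_quotient_iso_general K n k
end
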